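/- arXiv:2512.15605 — 3 statements merged into one kernel-verified Lean document; each statement's English description precedes it below -/
import Mathlib

section
/- Stability of softargmax with respect to Kullback–Leibler divergence: for every k ≥ 1 and all functions f, g : Fin k → ℝ, the distributions p_f = softargmax(f) and p_g = softargmax(g) satisfy KL(p_f, p_g) ≤ 2·‖f − g‖_∞, where ‖h‖_∞ = max_{j} |h(j)|. -/
/-!
Writing `p_f = softargmax f`, one has `log (p_f i / p_g i) = (f i - g i) + (L g - L f)` with
`L h = log ∑ j, exp (h j)`. Hence `KL(p_f, p_g)` is the `p_f`-average of `f - g` plus `L g - L f`,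
and each of the two terms is at most `‖f - g‖_∞`: the first as an average, the second because
log-sum-exp is monotone and shifts by `c` when its argument does.
-/

open Finset Real

noncomputable section

variable {ι : Type*} [Fintype ι]

def softargmax (f : ι → ℝ) (i : ι) : ℝ := exp (f i) / ∑ j, exp (f j)

lemma sum_exp_pos [Nonempty ι] (f : ι → ℝ) : 0 < ∑ j, exp (f j) :=
  sum_pos (fun j _ => exp_pos (f j)) univ_nonempty

lemma softargmax_pos (f : ι → ℝ) (i : ι) : 0 < softargmax f i :=
  have : Nonempty ι := ⟨i⟩
  div_pos (exp_pos _) (sum_exp_pos f)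

lemma sum_softargmax [Nonempty ι] (f : ι → ℝ) : ∑ i, softargmax f i = 1 := by
  simp only [softargmax, ← sum_div, div_self (sum_exp_pos f).ne']

lemma log_softargmax (f : ι → ℝ) (i : ι) :
    log (softargmax f i) = f i - log (∑ j, exp (f j)) := by
  have : Nonempty ι := ⟨i⟩
  rw [softargmax, log_div (exp_ne_zero _) (sum_exp_pos f).ne', log_exp]

lemma log_softargmax_div (f g : ι → ℝ) (i : ι) :
    log (softargmax f i / softargmax g i) =
      (f i - g i) + (log (∑ j, exp (g j)) - log (∑ j, exp (f j))) := by
  rw [log_div (softargmax_pos f i).ne' (softargmax_pos g i).ne', log_softargmax,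
    log_softargmax]
  ring

lemma sum_softargmax_mul_le [Nonempty ι] (f : ι → ℝ) {h : ι → ℝ} {M : ℝ} (hM : ∀ i, h i ≤ M) :
    ∑ i, softargmax f i * h i ≤ M :=
  calc ∑ i, softargmax f i * h i
      ≤ ∑ i, softargmax f i * M :=
        sum_le_sum fun i _ => mul_le_mul_of_nonneg_left (hM i) (softargmax_pos f i).le
    _ = M := by rw [← sum_mul, sum_softargmax, one_mul]

lemma log_sum_exp_le_of_le [Nonempty ι] {f g : ι → ℝ} {M : ℝ} (hM : ∀ i, g i ≤ f i + M) :
    log (∑ j, exp (g j)) ≤ log (∑ j, exp (f j)) + M := by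
  have hsum : ∑ j, exp (g j) ≤ exp M * ∑ j, exp (f j) := by
    rw [mul_sum]
    exact sum_le_sum fun j _ => by rw [← exp_add]; exact exp_le_exp.mpr (by linarith [hM j])
  calc log (∑ j, exp (g j))
      ≤ log (exp M * ∑ j, exp (f j)) := log_le_log (sum_exp_pos g) hsum
    _ = log (∑ j, exp (f j)) + M := by
        rw [log_mul (exp_ne_zero M) (sum_exp_pos f).ne', log_exp, add_comm]

lemma kl_softargmax_eq [Nonempty ι] (f g : ι → ℝ) :
    ∑ i, softargmax f i * log (softargmax f i / softargmax g i) =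
      ∑ i, softargmax f i * (f i - g i) +
        (log (∑ j, exp (g j)) - log (∑ j, exp (f j))) := by
  simp only [log_softargmax_div, mul_add, sum_add_distrib, ← sum_mul, sum_softargmax, one_mul]

lemma kl_softargmax_le [Nonempty ι] {f g : ι → ℝ} {M : ℝ} (hM : ∀ i, |f i - g i| ≤ M) :
    ∑ i, softargmax f i * log (softargmax f i / softargmax g i) ≤ 2 * M := by
  have hfg : ∀ i, f i - g i ≤ M := fun i => (le_abs_self _).trans (hM i)
  have hgf : ∀ i, g i ≤ f i + M := fun i => by linarith [neg_abs_le (f i - g i), hM i]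
  rw [kl_softargmax_eq]
  linarith [sum_softargmax_mul_le f hfg, log_sum_exp_le_of_le hgf]

end

/-- **Stability of softargmax w.r.t. Kullback–Leibler divergence.**
For every `k ≥ 1` and all `f, g : Fin k → ℝ`, the softargmax distributions
`p_f(i) = exp (f i) / ∑ j, exp (f j)` and `p_g` satisfy
`KL(p_f, p_g) ≤ 2 ⬝ ‖f - g‖_∞`. -/
theorem softargmax_kl_stability (k : ℕ) (hk : 1 ≤ k) (f g : Fin k → ℝ) :
    (∑ i, (Real.exp (f i) / ∑ j, Real.exp (f j)) *
        Real.log ((Real.exp (f i) / ∑ j, Real.exp (f j)) /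
          (Real.exp (g i) / ∑ j, Real.exp (g j)))) ≤
      2 * Finset.univ.sup' (Finset.univ_nonempty_iff.mpr ⟨⟨0, hk⟩⟩)
        (fun j => |f j - g j|) :=
  have : Nonempty (Fin k) := ⟨⟨0, hk⟩⟩
  kl_softargmax_le fun i => le_sup' (fun j => |f j - g j|) (mem_univ i)
end

section
/- Bijection between EBMs and ARMs (equality of distributions): if q = M(r), then for every finished response y ∈ 𝒴 one has p^EBM_{R_r}(y|x) = p^ARM_q(y|x). -/
open Finset

/-! Contexts extending a fixed prompt `x` by `t < T` vocabulary tokens; a context is a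
prefix of vocabulary tokens of length `< T`.  `none : Option V` plays the role of `EOS`. -/

/-- Contexts extending the prompt by fewer than `T` vocabulary tokens. -/
abbrev Ctx (V : Type) (T : ℕ) := Σ t : Fin T, Fin (t : ℕ) → V

/-- Admissible next tokens at a context: only `EOS` (= `none`) at maximal contexts. -/
def adm (V : Type) [Fintype V] (T : ℕ) (s : Ctx V T) : Finset (Option V) :=
  if (s.1 : ℕ) + 1 = T then {none} else Finset.univ

/-- Soft value `V_q(s) = log ∑_{j admissible at s} exp q(s, j)`. -/
noncomputable def Vq (V : Type) [Fintype V] (T : ℕ)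
    (q : Ctx V T × Option V → ℝ) (s : Ctx V T) : ℝ :=
  Real.log (∑ a ∈ adm V T s, Real.exp (q (s, a)))

/-- Next-token policy `π_q(j | s) = exp (q(s,j) - V_q(s))`. -/
noncomputable def piq (V : Type) [Fintype V] (T : ℕ)
    (q : Ctx V T × Option V → ℝ) (s : Ctx V T) (a : Option V) : ℝ :=
  Real.exp (q (s, a) - Vq V T q s)

/-- Extending a context by one vocabulary token. -/
def ext (V : Type) (T : ℕ) (s : Ctx V T) (v : V) (h : (s.1 : ℕ) + 1 < T) : Ctx V T :=
  ⟨⟨(s.1 : ℕ) + 1, h⟩, Fin.snoc s.2 v⟩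

/-- The strict prefix of length `i` of (the vocabulary part of) a finished response `y`. -/
def pref (V : Type) (T : ℕ) (y : Ctx V T) (i : Fin (y.1 : ℕ)) : Ctx V T :=
  ⟨⟨(i : ℕ), lt_trans i.isLt y.1.isLt⟩, fun j => y.2 (Fin.castLE (le_of_lt i.isLt) j)⟩

/-- The mapping `M` (backward recursion), as a function of the depth of the context. -/
noncomputable def Mgo (V : Type) [Fintype V] (T : ℕ) (r : Ctx V T × Option V → ℝ)
    (t : ℕ) (ht : t < T) (s : Fin t → V) (a : Option V) : ℝ :=
  match a with
  | none => r (⟨⟨t, ht⟩, s⟩, none)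
  | some v =>
    r (⟨⟨t, ht⟩, s⟩, some v) +
      if h : t + 1 < T then
        Real.log (∑ b ∈ adm V T ⟨⟨t + 1, h⟩, Fin.snoc s v⟩,
          Real.exp (Mgo V T r (t + 1) h (Fin.snoc s v) b))
      else 0
termination_by T - t
decreasing_by omega

/-- The mapping `q = M(r)`: `q(s, EOS) = r(s, EOS)` and
`q(s, y) = r(s, y) + V_q(s ⊕ y)` for a vocabulary token `y`. -/
noncomputable def Mmap (V : Type) [Fintype V] (T : ℕ)
    (r : Ctx V T × Option V → ℝ) : Ctx V T × Option V → ℝ :=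
  fun p => Mgo V T r (p.1.1 : ℕ) p.1.1.isLt p.1.2 p.2

/-- The inverse mapping `r = M⁻¹(q)`: `r(s, EOS) = q(s, EOS)` and
`r(s, y) = q(s, y) - V_q(s ⊕ y)` for a vocabulary token `y`. -/
noncomputable def Minv (V : Type) [Fintype V] (T : ℕ)
    (q : Ctx V T × Option V → ℝ) : Ctx V T × Option V → ℝ :=
  fun p =>
    match p with
    | (s, none) => q (s, none)
    | (s, some v) =>
      q (s, some v) - if h : (s.1 : ℕ) + 1 < T then Vq V T q (ext V T s v h) else 0

/-- Autoregressive probability of the finished response `y ⊕ EOS`. -/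
noncomputable def pARM (V : Type) [Fintype V] (T : ℕ)
    (q : Ctx V T × Option V → ℝ) (y : Ctx V T) : ℝ :=
  (∏ i : Fin (y.1 : ℕ), piq V T q (pref V T y i) (some (y.2 i))) * piq V T q y none

/-- Sequence-level reward `R_r(x, y) = ∑_t r(x ⊕ y_{<t}, y_t)` of the finished
response `y ⊕ EOS`. -/
noncomputable def Rr (V : Type) [Fintype V] (T : ℕ)
    (r : Ctx V T × Option V → ℝ) (y : Ctx V T) : ℝ :=
  (∑ i : Fin (y.1 : ℕ), r (pref V T y i, some (y.2 i))) + r (y, none)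

/-- Sequence-level log-partition `A^EBM_{R_r}(x)`. -/
noncomputable def Aebm (V : Type) [Fintype V] (T : ℕ)
    (r : Ctx V T × Option V → ℝ) : ℝ :=
  Real.log (∑ y : Ctx V T, Real.exp (Rr V T r y))

/-- EBM probability of the finished response `y ⊕ EOS`. -/
noncomputable def pEBM (V : Type) [Fintype V] (T : ℕ)
    (r : Ctx V T × Option V → ℝ) (y : Ctx V T) : ℝ :=
  Real.exp (Rr V T r y - Aebm V T r)


/-!
Unrolling `M`, `exp V_q(s)` is the total weight `∑ exp R_r(x, y)` of the finished responses `y`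
through the context `s`, divided by `exp` of the reward already collected along `s`.
This follows by backward induction on the depth of `s`, splitting the responses through `s` into
`s` itself and, for each token `v`, those through `s ⊕ v`; at the empty context it identifies
`V_q(x)` with `A^EBM_{R_r}(x)`. Along a fixed response each ARM factor is
`exp (r(s_t, y_t) + V_q(s_{t+1}) - V_q(s_t))`, so the product telescopes to
`exp (R_r(x, y) - V_q(x))`.
-/

namespace Ctx

variable {V : Type} {T : ℕ}

def take (y : Ctx V T) (n : ℕ) (h : n ≤ y.1) : Ctx V T :=
  ⟨⟨n, h.trans_lt y.1.isLt⟩, Fin.take n h y.2⟩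

def IsPrefix (s y : Ctx V T) : Prop :=
  ∃ h : (s.1 : ℕ) ≤ y.1, Fin.take s.1 h y.2 = s.2

lemma take_self (y : Ctx V T) : y.take y.1 le_rfl = y := by
  obtain ⟨⟨n, hn⟩, g⟩ := y
  simp [take]

lemma pref_eq_take (y : Ctx V T) (i : Fin y.1) : pref V T y i = y.take i i.isLt.le := rfl

lemma ext_pref (y : Ctx V T) (i : Fin y.1) (hT : (i : ℕ) + 1 < T) :
    ext V T (pref V T y i) (y.2 i) hT = y.take (i + 1) i.isLt := by
  simp only [pref_eq_take, take, _root_.ext, Fin.take_succ_eq_snoc]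

lemma pref_ext_castSucc (s : Ctx V T) (v : V) (h : (s.1 : ℕ) + 1 < T) (i : Fin s.1) :
    pref V T (ext V T s v h) i.castSucc = pref V T s i := by
  simp only [pref_eq_take, take, _root_.ext]
  rw [← Fin.take_init, Fin.init_snoc]
  rfl

lemma pref_ext_last (s : Ctx V T) (v : V) (h : (s.1 : ℕ) + 1 < T) :
    pref V T (ext V T s v h) (Fin.last s.1) = s := by
  simp only [pref_eq_take, take, _root_.ext]
  rw [← Fin.take_init, Fin.init_snoc]
  exact take_self s

lemma isPrefix_refl (s : Ctx V T) : s.IsPrefix s := ⟨le_rfl, Fin.take_eq_self _⟩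

lemma isPrefix_take_zero (y z : Ctx V T) : (y.take 0 (Nat.zero_le _)).IsPrefix z :=
  ⟨Nat.zero_le _, funext fun i => Fin.elim0 i⟩

lemma IsPrefix.eq_of_le {s y : Ctx V T} (hs : s.IsPrefix y) (hy : (y.1 : ℕ) ≤ s.1) : s = y := by
  obtain ⟨⟨n, hn⟩, g⟩ := s
  obtain ⟨⟨m, hm⟩, g'⟩ := y
  obtain ⟨h, hg⟩ := hs
  obtain rfl : n = m := le_antisymm h hy
  simp_all

lemma isPrefix_ext_iff (s : Ctx V T) (v : V) (h : (s.1 : ℕ) + 1 < T) (y : Ctx V T) :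
    (ext V T s v h).IsPrefix y ↔
      s.IsPrefix y ∧ ∃ hy : (s.1 : ℕ) < y.1, y.2 ⟨s.1, hy⟩ = v := by
  constructor
  · rintro ⟨hy, hyt⟩
    change Fin.take (Nat.succ s.1) hy y.2 = Fin.snoc s.2 v at hyt
    rw [Fin.take_succ_eq_snoc _ hy, Fin.snoc_inj] at hyt
    exact ⟨⟨_, hyt.1⟩, hy, hyt.2⟩
  · rintro ⟨⟨_, hs⟩, hy, rfl⟩
    refine ⟨hy, ?_⟩
    change Fin.take (Nat.succ s.1) hy y.2 = Fin.snoc s.2 _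
    rw [Fin.take_succ_eq_snoc _ hy, hs]

open Classical in
lemma filter_isPrefix_eq_insert_biUnion [Fintype V] (s : Ctx V T) (h : (s.1 : ℕ) + 1 < T) :
    univ.filter s.IsPrefix =
      insert s (univ.biUnion fun v => univ.filter (ext V T s v h).IsPrefix) := by
  ext y
  simp only [mem_filter, mem_univ, true_and, mem_insert, mem_biUnion, isPrefix_ext_iff]
  constructor
  · intro hs
    by_cases hy : (s.1 : ℕ) < y.1
    · exact Or.inr ⟨_, hs, hy, rfl⟩
    · exact Or.inl (hs.eq_of_le (not_lt.1 hy)).symm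
  · rintro (rfl | ⟨_, hs, _⟩)
    exacts [isPrefix_refl y, hs]

open Classical in
lemma filter_isPrefix_eq_singleton [Fintype V] (s : Ctx V T) (h : (s.1 : ℕ) + 1 = T) :
    univ.filter s.IsPrefix = {s} := by
  ext y
  simp only [mem_filter, mem_univ, true_and, mem_singleton]
  refine ⟨fun hs => (hs.eq_of_le (by omega)).symm, ?_⟩
  rintro rfl
  exact isPrefix_refl y

open Classical in
lemma sum_filter_isPrefix {M : Type*} [AddCommMonoid M] [Fintype V] (f : Ctx V T → M)
    (s : Ctx V T) (h : (s.1 : ℕ) + 1 < T) :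
    ∑ y ∈ univ.filter s.IsPrefix, f y =
      f s + ∑ v, ∑ y ∈ univ.filter (ext V T s v h).IsPrefix, f y := by
  have hs : s ∉ univ.biUnion fun v => univ.filter (ext V T s v h).IsPrefix := by
    simp [isPrefix_ext_iff]
  have hdisj : ((univ : Finset V) : Set V).PairwiseDisjoint
      fun v => univ.filter (ext V T s v h).IsPrefix := by
    intro v _ w _ hvw
    refine disjoint_filter.2 fun y _ hv hw => hvw ?_
    obtain ⟨-, -, rfl⟩ := (isPrefix_ext_iff s v h y).1 hv
    obtain ⟨-, -, rfl⟩ := (isPrefix_ext_iff s w h y).1 hw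
    rfl
  rw [filter_isPrefix_eq_insert_biUnion s h, sum_insert hs, sum_biUnion hdisj]

end Ctx

open Ctx

section

variable {V : Type} {T : ℕ}

def prefixReward (r : Ctx V T × Option V → ℝ) (s : Ctx V T) : ℝ :=
  ∑ i : Fin s.1, r (pref V T s i, some (s.2 i))

lemma Rr_eq_prefixReward_add [Fintype V] (r : Ctx V T × Option V → ℝ) (y : Ctx V T) :
    Rr V T r y = prefixReward r y + r (y, none) := rfl

lemma prefixReward_ext (r : Ctx V T × Option V → ℝ) (s : Ctx V T) (v : V)
    (h : (s.1 : ℕ) + 1 < T) :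
    prefixReward r (ext V T s v h) = prefixReward r s + r (s, some v) := by
  change ∑ i : Fin (s.1 + 1),
    r (pref V T (ext V T s v h) i, some (Fin.snoc (α := fun _ => V) s.2 v i)) = _
  rw [Fin.sum_univ_castSucc]
  simp only [Fin.snoc_castSucc, Fin.snoc_last, pref_ext_castSucc, pref_ext_last]
  rfl

lemma prefixReward_take_zero (r : Ctx V T × Option V → ℝ) (y : Ctx V T) :
    prefixReward r (y.take 0 (Nat.zero_le _)) = 0 :=
  Fin.sum_univ_zero _

lemma Mmap_none [Fintype V] (r : Ctx V T × Option V → ℝ) (s : Ctx V T) :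
    Mmap V T r (s, none) = r (s, none) := by
  rw [Mmap, Mgo]

lemma Mmap_some [Fintype V] (r : Ctx V T × Option V → ℝ) (s : Ctx V T) (v : V)
    (h : (s.1 : ℕ) + 1 < T) :
    Mmap V T r (s, some v) = r (s, some v) + Vq V T (Mmap V T r) (ext V T s v h) := by
  rw [Mmap, Mgo, dif_pos h]
  rfl

lemma exp_Vq [Fintype V] (q : Ctx V T × Option V → ℝ) (s : Ctx V T) :
    Real.exp (Vq V T q s) = ∑ a ∈ adm V T s, Real.exp (q (s, a)) := by
  have hnone : none ∈ adm V T s := by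
    unfold adm
    split_ifs <;> simp
  exact Real.exp_log (sum_pos (fun _ _ => Real.exp_pos _) ⟨none, hnone⟩)

open Classical in
theorem sum_filter_isPrefix_exp_Rr [Fintype V] (r : Ctx V T × Option V → ℝ) (s : Ctx V T) :
    ∑ y ∈ univ.filter s.IsPrefix, Real.exp (Rr V T r y) =
      Real.exp (prefixReward r s + Vq V T (Mmap V T r) s) := by
  rw [Real.exp_add, exp_Vq]
  by_cases h : (s.1 : ℕ) + 1 < T
  · have hadm : adm V T s = univ := if_neg (by omega)
    rw [sum_filter_isPrefix _ s h, hadm, Fintype.sum_option, mul_add, mul_sum, Mmap_none,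
      Rr_eq_prefixReward_add, Real.exp_add]
    congr 1
    refine sum_congr rfl fun v _ => ?_
    rw [sum_filter_isPrefix_exp_Rr r (ext V T s v h), prefixReward_ext,
      Mmap_some r s v h, Real.exp_add, Real.exp_add, Real.exp_add]
    ring
  · have hadm : adm V T s = {none} := if_pos (by omega)
    rw [filter_isPrefix_eq_singleton s (by omega), hadm, sum_singleton, sum_singleton,
      Mmap_none, Rr_eq_prefixReward_add, Real.exp_add]
termination_by T - s.1
decreasing_by
  change T - (s.1 + 1) < T - s.1
  omega

theorem pARM_Mmap [Fintype V] (r : Ctx V T × Option V → ℝ) (y : Ctx V T) :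
    pARM V T (Mmap V T r) y =
      Real.exp (Rr V T r y - Vq V T (Mmap V T r) (y.take 0 (Nat.zero_le _))) := by
  let g : ℕ → ℝ := fun n => if h : n ≤ y.1 then Vq V T (Mmap V T r) (y.take n h) else 0
  have hstep (i : Fin y.1) :
      Mmap V T r (pref V T y i, some (y.2 i)) - Vq V T (Mmap V T r) (pref V T y i) =
        r (pref V T y i, some (y.2 i)) + (g (i + 1) - g i) := by
    have hT : (i : ℕ) + 1 < T := by have := y.1.isLt; omega
    simp only [g, dif_pos (show (i : ℕ) + 1 ≤ y.1 from i.isLt), dif_pos i.isLt.le]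
    rw [Mmap_some r _ _ hT, ext_pref y i hT, pref_eq_take]
    ring
  have htelescope : ∑ i : Fin y.1, (g (i + 1) - g i) =
      Vq V T (Mmap V T r) y - Vq V T (Mmap V T r) (y.take 0 (Nat.zero_le _)) := by
    rw [Fin.sum_univ_eq_sum_range (fun n => g (n + 1) - g n), sum_range_sub]
    simp only [g, dif_pos le_rfl, dif_pos (Nat.zero_le _), take_self]
  calc pARM V T (Mmap V T r) y
      = Real.exp (∑ i : Fin y.1, (Mmap V T r (pref V T y i, some (y.2 i)) -
            Vq V T (Mmap V T r) (pref V T y i)) +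
          (Mmap V T r (y, none) - Vq V T (Mmap V T r) y)) := by
        simp only [pARM, piq, Real.exp_sum, Real.exp_add]
    _ = Real.exp (Rr V T r y - Vq V T (Mmap V T r) (y.take 0 (Nat.zero_le _))) := by
        rw [sum_congr rfl fun i _ => hstep i, sum_add_distrib, htelescope, Mmap_none, Rr]
        congr 1
        ring

end

theorem ebm_eq_arm_general (V : Type) [Fintype V] (T : ℕ)
    (r q : Ctx V T × Option V → ℝ) (hq : q = Mmap V T r) (y : Ctx V T) :
    pEBM V T r y = pARM V T q y := by
  subst hq
  have hA : Aebm V T r = Vq V T (Mmap V T r) (y.take 0 (Nat.zero_le _)) := by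
    classical
    have hroot := sum_filter_isPrefix_exp_Rr r (y.take 0 (Nat.zero_le _))
    rw [filter_true_of_mem fun z _ => isPrefix_take_zero y z] at hroot
    rw [Aebm, hroot, prefixReward_take_zero, zero_add, Real.log_exp]
  rw [pEBM, pARM_Mmap, hA]

/-- **Bijection between EBMs and ARMs (equality of distributions).**
If `q = M(r)`, then for every finished response `y` one has
`p^EBM_{R_r}(y | x) = p^ARM_q(y | x)`. -/
theorem ebm_eq_arm (V : Type) [Fintype V] (T : ℕ) (hT : 1 ≤ T)
    (r q : Ctx V T × Option V → ℝ) (hq : q = Mmap V T r) (y : Ctx V T) :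
    pEBM V T r y = pARM V T q y :=
  ebm_eq_arm_general V T r q hq y
end

section
/- Chain rule of entropy under stochastic transition dynamics: with S, A finite, transition kernel μ, full-support policy π, fixed initial state s₁ and horizon T, let p be the trajectory distribution p(τ|s₁) = Π_{t=1}^T π(a_t|s_t)·μ(s_{t+1}|s_t,a_t). Then H(p(·|s₁)) = Σ_{t=1}^T [ Σ_{s} p_t(s|s₁)·H(π(·|s)) + Σ_{s,a} p_t(s|s₁)·π(a|s)·H(μ(·|s,a)) ], where p_t(s|s₁) is the marginal probability under p of being in state s at time t, and H is the Shannon entropy. -/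
open Finset

/-- The state at (1-indexed) time `t + 1` along a trajectory: the initial state `s₁`
at time `1`, and thereafter the recorded successor states. -/
def stateAt (S : Type) (T : ℕ) (s₁ : S) (ss : Fin T → S) (t : Fin T) : S :=
  if h : (t : ℕ) = 0 then s₁ else ss ⟨(t : ℕ) - 1, by omega⟩

/-- Probability of the trajectory `τ = (a_1, s_2, …, a_T, s_{T+1})` (encoded as the
pair of its action and successor-state sequences):
`p(τ | s₁) = ∏_{t=1}^T π(a_t | s_t) ⬝ μ(s_{t+1} | s_t, a_t)`. -/
noncomputable def trajProb (S A : Type) [Fintype S] [Fintype A] (T : ℕ)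
    (π : S → A → ℝ) (μ : S → A → S → ℝ) (s₁ : S)
    (τ : (Fin T → A) × (Fin T → S)) : ℝ :=
  ∏ t : Fin T,
    π (stateAt S T s₁ τ.2 t) (τ.1 t) * μ (stateAt S T s₁ τ.2 t) (τ.1 t) (τ.2 t)

/-- Marginal probability, under the trajectory distribution, that the state at
(1-indexed) time `t + 1` equals `s`. -/
noncomputable def stateMarginal (S A : Type) [Fintype S] [Fintype A] [DecidableEq S]
    (T : ℕ) (π : S → A → ℝ) (μ : S → A → S → ℝ) (s₁ : S) (t : Fin T) (s : S) : ℝ :=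
  ∑ τ ∈ Finset.univ.filter
      (fun τ : (Fin T → A) × (Fin T → S) => stateAt S T s₁ τ.2 t = s),
    trajProb S A T π μ s₁ τ

/-! A trajectory of length `T + 1` from `s₁` is a first pair `(a, s₂)` followed by a trajectory
of length `T` from `s₂`, and its probability factors as `π(a|s₁) μ(s₂|s₁,a) p_T(τ|s₂)`. Since
`negMulLog (x * y) = y * negMulLog x + x * negMulLog y` and the second factor sums to one, the
entropy of `p_{T+1}(·|s₁)` is the entropy of the first step plus the `π μ`-average of the
entropies of `p_T(·|s₂)`. The state marginals satisfy the same first-step recursion, so the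
formula follows by induction on `T`. -/

open Real (negMulLog negMulLog_mul)

theorem sum_negMulLog_mul_of_sum_eq_one {ι κ : Type*} [Fintype ι] [Fintype κ]
    (w : ι → ℝ) (q : ι → κ → ℝ) (hq : ∀ i, ∑ k, q i k = 1) :
    ∑ i, ∑ k, negMulLog (w i * q i k) =
      ∑ i, negMulLog (w i) + ∑ i, w i * ∑ k, negMulLog (q i k) := by
  simp only [negMulLog_mul, sum_add_distrib, ← sum_mul, ← mul_sum, hq, one_mul]

theorem neg_sum_mul_log_eq_sum_negMulLog {ι : Type*} [Fintype ι] (p : ι → ℝ) :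
    -∑ i, p i * Real.log (p i) = ∑ i, negMulLog (p i) := by
  simp only [negMulLog, neg_mul, sum_neg_distrib]

theorem stateAt_zero {S : Type} (T : ℕ) (s₁ : S) (ss : Fin (T + 1) → S) :
    stateAt S (T + 1) s₁ ss 0 = s₁ := rfl

theorem stateAt_cons_succ {S : Type} (T : ℕ) (s₁ s₂ : S) (ss : Fin T → S) (t : Fin T) :
    stateAt S (T + 1) s₁ (Fin.cons s₂ ss) t.succ = stateAt S T s₂ ss t := by
  rcases t with ⟨_ | k, hk⟩
  · rfl
  · simp only [stateAt]
    exact Fin.cons_succ (α := fun _ => S) s₂ ss ⟨k, by omega⟩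

def trajConsEquiv (S A : Type) (T : ℕ) :
    (A × S) × ((Fin T → A) × (Fin T → S)) ≃ (Fin (T + 1) → A) × (Fin (T + 1) → S) :=
  (Equiv.prodProdProdComm A S (Fin T → A) (Fin T → S)).trans
    ((Fin.consEquiv fun _ => A).prodCongr (Fin.consEquiv fun _ => S))

section Trajectories

variable {S A : Type} [Fintype S] [Fintype A]

theorem sum_traj_succ (T : ℕ) (f : (Fin (T + 1) → A) × (Fin (T + 1) → S) → ℝ) :
    ∑ τ, f τ = ∑ x : A × S, ∑ τ : (Fin T → A) × (Fin T → S),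
      f (Fin.cons x.1 τ.1, Fin.cons x.2 τ.2) := by
  rw [← Fintype.sum_prod_type', ← (trajConsEquiv S A T).sum_comp]
  rfl

variable (π : S → A → ℝ) (μ : S → A → S → ℝ)

theorem trajProb_cons (T : ℕ) (s₁ : S) (x : A × S) (τ : (Fin T → A) × (Fin T → S)) :
    trajProb S A (T + 1) π μ s₁ (Fin.cons x.1 τ.1, Fin.cons x.2 τ.2) =
      π s₁ x.1 * μ s₁ x.1 x.2 * trajProb S A T π μ x.2 τ := by
  simp only [trajProb, Fin.prod_univ_succ, stateAt_cons_succ, stateAt_zero, Fin.cons_zero,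
    Fin.cons_succ]

theorem sum_trajProb (hμ1 : ∀ s a, ∑ s', μ s a s' = 1) (hπ1 : ∀ s, ∑ a, π s a = 1)
    (T : ℕ) (s₁ : S) : ∑ τ, trajProb S A T π μ s₁ τ = 1 := by
  induction T generalizing s₁ with
  | zero => simp [trajProb]
  | succ T ih =>
    rw [sum_traj_succ]
    simp only [trajProb_cons, ← mul_sum, ih, mul_one, Fintype.sum_prod_type, hμ1, hπ1]

noncomputable def stepEntropy (s : S) : ℝ :=
  ∑ a, negMulLog (π s a) + ∑ a, π s a * ∑ s', negMulLog (μ s a s')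

theorem sum_negMulLog_trajProb_succ (hμ1 : ∀ s a, ∑ s', μ s a s' = 1)
    (hπ1 : ∀ s, ∑ a, π s a = 1) (T : ℕ) (s₁ : S) :
    ∑ τ, negMulLog (trajProb S A (T + 1) π μ s₁ τ) =
      stepEntropy π μ s₁ + ∑ x : A × S, π s₁ x.1 * μ s₁ x.1 x.2 *
        ∑ τ, negMulLog (trajProb S A T π μ x.2 τ) := by
  rw [sum_traj_succ]
  simp only [trajProb_cons]
  rw [sum_negMulLog_mul_of_sum_eq_one (fun x : A × S => π s₁ x.1 * μ s₁ x.1 x.2)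
      (fun x => trajProb S A T π μ x.2) fun x => sum_trajProb π μ hμ1 hπ1 T x.2,
    Fintype.sum_prod_type, sum_negMulLog_mul_of_sum_eq_one (π s₁) (μ s₁) (hμ1 s₁)]
  rfl

variable [DecidableEq S]

theorem stateMarginal_zero (hμ1 : ∀ s a, ∑ s', μ s a s' = 1) (hπ1 : ∀ s, ∑ a, π s a = 1)
    (T : ℕ) (s₁ s : S) :
    stateMarginal S A (T + 1) π μ s₁ 0 s = if s₁ = s then 1 else 0 := by
  simp only [stateMarginal, stateAt_zero]
  split_ifs with h
  · simpa only [h, filter_true] using sum_trajProb π μ hμ1 hπ1 _ _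
  · simp only [h, filter_false, sum_empty]

theorem stateMarginal_succ (T : ℕ) (s₁ : S) (t : Fin T) (s : S) :
    stateMarginal S A (T + 1) π μ s₁ t.succ s =
      ∑ x : A × S, π s₁ x.1 * μ s₁ x.1 x.2 * stateMarginal S A T π μ x.2 t s := by
  simp only [stateMarginal, sum_filter, sum_traj_succ, stateAt_cons_succ, trajProb_cons,
    mul_sum, mul_ite, mul_zero]

theorem sum_stateMarginal_mul_succ (hμ1 : ∀ s a, ∑ s', μ s a s' = 1)
    (hπ1 : ∀ s, ∑ a, π s a = 1) (T : ℕ) (s₁ : S) (f : S → ℝ) :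
    ∑ t : Fin (T + 1), ∑ s, stateMarginal S A (T + 1) π μ s₁ t s * f s =
      f s₁ + ∑ x : A × S, π s₁ x.1 * μ s₁ x.1 x.2 *
        ∑ t : Fin T, ∑ s, stateMarginal S A T π μ x.2 t s * f s := by
  rw [Fin.sum_univ_succ]
  simp only [stateMarginal_zero π μ hμ1 hπ1, stateMarginal_succ, ite_mul, one_mul, zero_mul,
    sum_ite_eq, mem_univ, if_true, sum_mul, mul_sum, mul_assoc]
  exact congrArg _ (sum_comm.trans (sum_congr rfl fun _ _ => sum_comm)).symm

theorem sum_negMulLog_trajProb (hμ1 : ∀ s a, ∑ s', μ s a s' = 1)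
    (hπ1 : ∀ s, ∑ a, π s a = 1) (T : ℕ) (s₁ : S) :
    ∑ τ, negMulLog (trajProb S A T π μ s₁ τ) =
      ∑ t, ∑ s, stateMarginal S A T π μ s₁ t s * stepEntropy π μ s := by
  induction T generalizing s₁ with
  | zero => simp [trajProb]
  | succ T ih =>
    simp only [sum_negMulLog_trajProb_succ π μ hμ1 hπ1, sum_stateMarginal_mul_succ π μ hμ1 hπ1,
      ih]

end Trajectories

theorem entropy_chain_rule_trajectories_general (S A : Type) [Fintype S] [Fintype A]
    [DecidableEq S] (T : ℕ) (μ : S → A → S → ℝ) (π : S → A → ℝ) (s₁ : S)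
    (hμ1 : ∀ s a, ∑ s', μ s a s' = 1)
    (hπ1 : ∀ s, ∑ a, π s a = 1) :
    (-∑ τ : (Fin T → A) × (Fin T → S),
        trajProb S A T π μ s₁ τ * Real.log (trajProb S A T π μ s₁ τ)) =
      ∑ t : Fin T,
        ((∑ s : S, stateMarginal S A T π μ s₁ t s *
            (-∑ a, π s a * Real.log (π s a))) +
          ∑ s : S, ∑ a : A, stateMarginal S A T π μ s₁ t s * π s a *
            (-∑ s', μ s a s' * Real.log (μ s a s'))) := by
  simp only [neg_sum_mul_log_eq_sum_negMulLog, sum_negMulLog_trajProb π μ hμ1 hπ1, stepEntropy,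
    mul_add, sum_add_distrib, mul_sum, mul_assoc]

/-- **Chain rule of entropy under stochastic transition dynamics.**
For finite `S`, `A`, a transition kernel `μ`, a full-support policy `π`, a fixed
initial state `s₁` and horizon `T`, the Shannon entropy of the induced trajectory
distribution equals
`∑_{t=1}^T [∑_s p_t(s|s₁) H(π(·|s)) + ∑_{s,a} p_t(s|s₁) π(a|s) H(μ(·|s,a))]`. -/
theorem entropy_chain_rule_trajectories (S A : Type) [Fintype S] [Fintype A]
    [DecidableEq S] (T : ℕ) (μ : S → A → S → ℝ) (π : S → A → ℝ) (s₁ : S)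
    (hμ0 : ∀ s a s', 0 ≤ μ s a s') (hμ1 : ∀ s a, ∑ s', μ s a s' = 1)
    (hπ : ∀ s a, 0 < π s a) (hπ1 : ∀ s, ∑ a, π s a = 1) :
    (-∑ τ : (Fin T → A) × (Fin T → S),
        trajProb S A T π μ s₁ τ * Real.log (trajProb S A T π μ s₁ τ)) =
      ∑ t : Fin T,
        ((∑ s : S, stateMarginal S A T π μ s₁ t s *
            (-∑ a, π s a * Real.log (π s a))) +
          ∑ s : S, ∑ a : A, stateMarginal S A T π μ s₁ t s * π s a *
            (-∑ s', μ s a s' * Real.log (μ s a s'))) :=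
  entropy_chain_rule_trajectories_general S A T μ π s₁ hμ1 hπ1
end
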